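/- In the fixed-design linear-predictor setting of Theorem 2 (y : Ω → ℝ^n square-integrable with covariance matrix Σ; H a deterministic zero-diagonal n×n matrix; y_tr : Ω → ℝ^{n−1}, y_te : Ω → ℝ square-integrable; h_te ∈ ℝ^{n−1} deterministic; and for every k: E y_k = E y_te, Var(y_k) = Var(y_te), E[(Hy)_k] = E[h_te · y_tr], Var((Hy)_k) = Var(h_te · y_tr)), if additionally Cov((y_tr)_j, y_te) = 0 for every j (the test response is uncorrelated with the training responses), then w_cv = (2/n) tr(H Σ); equivalently, the corrected estimator CV_c = (1/n)‖y − H y‖² + (2/n) tr(H Σ) satisfies E[CV_c] = E[(y_te − h_te · y_tr)²], i.e. CV_c is an unbiased estimator of the generalization error. (Paper's Eq. (10).) -/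

import Mathlib

/-!
Every quantity in the claim is a mean squared difference `E[(U - V)²]`, which equals
`Var U - 2 Cov(U, V) + Var V + (E U - E V)²`. The moment-matching assumptions make the first
two moments of `y k` and `(H y) k` those of `yte` and `hte ⬝ ytr`, so the `k`-th in-sample error
differs from the test error only through the covariance terms: `Cov(y k, (H y) k) = (H Σ) k k`
on one side and `Cov(yte, hte ⬝ ytr) = 0` on the other. Summing over `k` produces the trace.
-/

open MeasureTheory ProbabilityTheory

/-- Variance `E[(U - E U)^2]` of a real random variable. -/
noncomputable def eVar {Ω : Type*} [MeasurableSpace Ω] (μ : Measure Ω) (U : Ω → ℝ) : ℝ :=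
  ∫ ω, (U ω - ∫ ω', U ω' ∂μ) ^ 2 ∂μ

/-- Covariance `E[(U - E U)(V - E V)]` of two real random variables. -/
noncomputable def eCov {Ω : Type*} [MeasurableSpace Ω] (μ : Measure Ω) (U V : Ω → ℝ) : ℝ :=
  ∫ ω, (U ω - ∫ ω', U ω' ∂μ) * (V ω - ∫ ω', V ω' ∂μ) ∂μ

section Moments

variable {Ω : Type*} [MeasurableSpace Ω] {μ : Measure Ω}

lemma eVar_eq_variance {U : Ω → ℝ} (hU : AEMeasurable U μ) : eVar μ U = Var[U; μ] :=
  (variance_eq_integral hU).symm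

lemma eCov_eq_covariance (U V : Ω → ℝ) : eCov μ U V = cov[U, V; μ] := rfl

lemma memLp_fun_sum_mul {ι : Type*} [Fintype ι] {p : ENNReal} (c : ι → ℝ) {X : ι → Ω → ℝ}
    (hX : ∀ i, MemLp (X i) p μ) : MemLp (fun ω => ∑ i, c i * X i ω) p μ :=
  memLp_finsetSum _ fun i _ => (hX i).const_mul (c i)

lemma covariance_fun_sum_mul_right [IsFiniteMeasure μ] {ι : Type*} [Fintype ι] {Y : Ω → ℝ}
    (hY : MemLp Y 2 μ) (c : ι → ℝ) {X : ι → Ω → ℝ} (hX : ∀ i, MemLp (X i) 2 μ) :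
    cov[Y, fun ω => ∑ i, c i * X i ω; μ] = ∑ i, c i * cov[Y, X i; μ] := by
  rw [covariance_fun_sum_right (X := fun i ω => c i * X i ω)
    (fun i => (hX i).const_mul (c i)) hY]
  simp_rw [covariance_const_mul_right]

lemma integral_sq_eq_variance_add_sq [IsProbabilityMeasure μ] {X : Ω → ℝ} (hX : MemLp X 2 μ) :
    ∫ ω, X ω ^ 2 ∂μ = Var[X; μ] + μ[X] ^ 2 := by
  rw [variance_eq_sub hX]
  simp

lemma integral_sub_sq [IsProbabilityMeasure μ] {X Y : Ω → ℝ} (hX : MemLp X 2 μ)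
    (hY : MemLp Y 2 μ) :
    ∫ ω, (X ω - Y ω) ^ 2 ∂μ = Var[X; μ] - 2 * cov[X, Y; μ] + Var[Y; μ] + (μ[X] - μ[Y]) ^ 2 := by
  rw [integral_sq_eq_variance_add_sq (X := fun ω => X ω - Y ω) (hX.sub hY),
    variance_fun_sub hX hY, integral_sub (hX.integrable one_le_two) (hY.integrable one_le_two)]

lemma integral_sub_sq_add_two_mul_covariance_congr [IsProbabilityMeasure μ] {X Y X' Y' : Ω → ℝ}
    (hX : MemLp X 2 μ) (hY : MemLp Y 2 μ) (hX' : MemLp X' 2 μ) (hY' : MemLp Y' 2 μ)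
    (hmeanX : μ[X] = μ[X']) (hmeanY : μ[Y] = μ[Y'])
    (hvarX : Var[X; μ] = Var[X'; μ]) (hvarY : Var[Y; μ] = Var[Y'; μ]) :
    ∫ ω, (X ω - Y ω) ^ 2 ∂μ + 2 * cov[X, Y; μ]
      = ∫ ω, (X' ω - Y' ω) ^ 2 ∂μ + 2 * cov[X', Y'; μ] := by
  rw [integral_sub_sq hX hY, integral_sub_sq hX' hY', hmeanX, hmeanY, hvarX, hvarY]
  ring

end Moments

theorem cv_corrected_unbiased_uncorrelated_test_general
    {Ω : Type*} [MeasurableSpace Ω] (μ : Measure Ω) [IsProbabilityMeasure μ]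
    (n : ℕ) (hn : 0 < n)
    (y : Fin n → Ω → ℝ) (hy : ∀ k, MemLp (y k) 2 μ)
    (H : Matrix (Fin n) (Fin n) ℝ)
    (ytr : Fin (n - 1) → Ω → ℝ) (hytr : ∀ j, MemLp (ytr j) 2 μ)
    (yte : Ω → ℝ) (hyte : MemLp yte 2 μ)
    (hte : Fin (n - 1) → ℝ)
    (Sig : Matrix (Fin n) (Fin n) ℝ)
    (hSig : ∀ i j, Sig i j = eCov μ (y i) (y j))
    (hmean : ∀ k, ∫ ω, y k ω ∂μ = ∫ ω, yte ω ∂μ)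
    (hvar : ∀ k, eVar μ (y k) = eVar μ yte)
    (hmeanH : ∀ k, ∫ ω, (∑ j, H k j * y j ω) ∂μ = ∫ ω, (∑ j, hte j * ytr j ω) ∂μ)
    (hvarH : ∀ k, eVar μ (fun ω => ∑ j, H k j * y j ω)
        = eVar μ (fun ω => ∑ j, hte j * ytr j ω))
    (hc : ∀ j, eCov μ (ytr j) yte = 0) :
    ((∫ ω, (yte ω - ∑ j, hte j * ytr j ω) ^ 2 ∂μ)
        - (1 / (n : ℝ)) * ∫ ω, ∑ k, (y k ω - ∑ j, H k j * y j ω) ^ 2 ∂μ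
      = (2 / (n : ℝ)) * Matrix.trace (H * Sig)) ∧
    ((1 / (n : ℝ)) * (∫ ω, ∑ k, (y k ω - ∑ j, H k j * y j ω) ^ 2 ∂μ)
        + (2 / (n : ℝ)) * Matrix.trace (H * Sig)
      = ∫ ω, (yte ω - ∑ j, hte j * ytr j ω) ^ 2 ∂μ) := by
  set T := ∫ ω, (yte ω - ∑ j, hte j * ytr j ω) ^ 2 ∂μ
  have hHy : ∀ k, MemLp (fun ω => ∑ j, H k j * y j ω) 2 μ := fun k => memLp_fun_sum_mul (H k) hy
  have hpred : MemLp (fun ω => ∑ j, hte j * ytr j ω) 2 μ := memLp_fun_sum_mul hte hytr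
  have hcov_test : cov[yte, fun ω => ∑ j, hte j * ytr j ω; μ] = 0 := by
    rw [covariance_fun_sum_mul_right hyte hte hytr]
    simp [covariance_comm yte, ← eCov_eq_covariance, hc]
  have hcov_fit : ∀ k, cov[y k, fun ω => ∑ j, H k j * y j ω; μ] = (H * Sig) k k := fun k => by
    rw [covariance_fun_sum_mul_right (hy k) (H k) hy, Matrix.mul_apply]
    simp [hSig, eCov_eq_covariance, covariance_comm (y k)]
  have hfit : ∀ k, ∫ ω, (y k ω - ∑ j, H k j * y j ω) ^ 2 ∂μ = T - 2 * (H * Sig) k k := by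
    intro k
    have h := integral_sub_sq_add_two_mul_covariance_congr (hy k) (hHy k) hyte hpred
      (hmean k) (hmeanH k)
      (by simpa [eVar_eq_variance, (hy k).aemeasurable, hyte.aemeasurable] using hvar k)
      (by simpa [eVar_eq_variance, (hHy k).aemeasurable, hpred.aemeasurable] using hvarH k)
    rw [hcov_fit, hcov_test] at h
    linarith
  have hsum : ∫ ω, ∑ k, (y k ω - ∑ j, H k j * y j ω) ^ 2 ∂μ
      = n * T - 2 * Matrix.trace (H * Sig) := by
    rw [integral_finsetSum (f := fun k ω => (y k ω - ∑ j, H k j * y j ω) ^ 2) _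
      fun k _ => ((hy k).sub (hHy k)).integrable_sq]
    simp [hfit, Finset.sum_sub_distrib, Finset.mul_sum, Matrix.trace]
  have hn' : (n : ℝ) ≠ 0 := by positivity
  constructor <;> rw [hsum] <;> field_simp <;> ring

/-- **Paper's Eq. (10).** In the fixed-design linear-predictor setting of Theorem 2, if the
test response is uncorrelated with the training responses, then the CV bias equals
`(2/n) tr(H Σ)`; equivalently, the corrected estimator
`CV_c = (1/n)‖y − H y‖² + (2/n) tr(H Σ)` is an unbiased estimator of the generalization
error. -/
theorem cv_corrected_unbiased_uncorrelated_test
    {Ω : Type*} [MeasurableSpace Ω] (μ : Measure Ω) [IsProbabilityMeasure μ]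
    (n : ℕ) (hn : 0 < n)
    (y : Fin n → Ω → ℝ) (hy : ∀ k, MemLp (y k) 2 μ)
    (H : Matrix (Fin n) (Fin n) ℝ) (hHdiag : ∀ k, H k k = 0)
    (ytr : Fin (n - 1) → Ω → ℝ) (hytr : ∀ j, MemLp (ytr j) 2 μ)
    (yte : Ω → ℝ) (hyte : MemLp yte 2 μ)
    (hte : Fin (n - 1) → ℝ)
    (Sig : Matrix (Fin n) (Fin n) ℝ)
    (hSig : ∀ i j, Sig i j = eCov μ (y i) (y j))
    (hmean : ∀ k, ∫ ω, y k ω ∂μ = ∫ ω, yte ω ∂μ)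
    (hvar : ∀ k, eVar μ (y k) = eVar μ yte)
    (hmeanH : ∀ k, ∫ ω, (∑ j, H k j * y j ω) ∂μ = ∫ ω, (∑ j, hte j * ytr j ω) ∂μ)
    (hvarH : ∀ k, eVar μ (fun ω => ∑ j, H k j * y j ω)
        = eVar μ (fun ω => ∑ j, hte j * ytr j ω))
    (hc : ∀ j, eCov μ (ytr j) yte = 0) :
    ((∫ ω, (yte ω - ∑ j, hte j * ytr j ω) ^ 2 ∂μ)
        - (1 / (n : ℝ)) * ∫ ω, ∑ k, (y k ω - ∑ j, H k j * y j ω) ^ 2 ∂μ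
      = (2 / (n : ℝ)) * Matrix.trace (H * Sig)) ∧
    ((1 / (n : ℝ)) * (∫ ω, ∑ k, (y k ω - ∑ j, H k j * y j ω) ^ 2 ∂μ)
        + (2 / (n : ℝ)) * Matrix.trace (H * Sig)
      = ∫ ω, (yte ω - ∑ j, hte j * ytr j ω) ^ 2 ∂μ) :=
  cv_corrected_unbiased_uncorrelated_test_general μ n hn y hy H ytr hytr yte hyte hte Sig hSig hmean
    hvar hmeanH hvarH hc
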